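/- arXiv:2410.06686 — 12 statements merged into one kernel-verified Lean document; each statement's English description precedes it below -/
import Mathlib

section
/- Let d ≥ 1, let ε : Fin d → ℝ be nondecreasing, and let β_h < β_w be real inverse temperatures. Let π^h and π^w be the Gibbs distributions at β_h and β_w, respectively. Then for every index n, the tail sum ∑_{k=n}^{d} π^w_k ≤ ∑_{k=n}^{d} π^h_k; equivalently, the hotter Gibbs state places at least as much total weight on every upper set of energy levels as the warmer one. -/
/-! Write `A_β` for the Boltzmann weight of a set `s` of levels and `B_β` for that of its
complement, so that the Gibbs mass of `s` is `A_β / (B_β + A_β)`. If every level in `s` lies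
above every level outside it, then `A_βw B_βh ≤ A_βh B_βw` term by term, since
`exp (-βw εᵢ - βh εⱼ) ≤ exp (-βh εᵢ - βw εⱼ)` for `εⱼ ≤ εᵢ`; cross-multiplying, raising `β`
moves mass out of `s`. A tail `Ici n` is such a set because `ε` is monotone. -/

open Finset Real

/-- The Gibbs distribution at inverse temperature `β` for energy levels `ε`. -/
noncomputable def gibbs {d : ℕ} (β : ℝ) (ε : Fin d → ℝ) : Fin d → ℝ :=
  fun n => Real.exp (-β * ε n) / ∑ m, Real.exp (-β * ε m)

theorem div_add_le_div_add_of_mul_le_mul {K : Type*} [Field K] [LinearOrder K]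
    [IsStrictOrderedRing K] {a b a' b' : K} (hb : 0 < b + a) (hb' : 0 < b' + a')
    (h : a * b' ≤ a' * b) : a / (b + a) ≤ a' / (b' + a') := by
  rw [div_le_div_iff₀ hb hb']
  linarith [mul_comm a a']

theorem sum_exp_mul_sum_exp_le {ι : Type*} {s t : Finset ι} {ε : ι → ℝ}
    (hst : ∀ i ∈ s, ∀ j ∈ t, ε j ≤ ε i) {βh βw : ℝ} (hβ : βh ≤ βw) :
    (∑ i ∈ s, exp (-βw * ε i)) * ∑ j ∈ t, exp (-βh * ε j) ≤
      (∑ i ∈ s, exp (-βh * ε i)) * ∑ j ∈ t, exp (-βw * ε j) := by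
  simp only [sum_mul_sum, ← exp_add]
  exact sum_le_sum fun i hi => sum_le_sum fun j hj =>
    exp_le_exp.mpr (by nlinarith [hst i hi j hj])

theorem sum_gibbs_eq {d : ℕ} (β : ℝ) (ε : Fin d → ℝ) (s : Finset (Fin d)) :
    ∑ k ∈ s, gibbs β ε k =
      (∑ k ∈ s, exp (-β * ε k)) / ((∑ k ∈ sᶜ, exp (-β * ε k)) + ∑ k ∈ s, exp (-β * ε k)) := by
  rw [sum_compl_add_sum, sum_div]
  rfl

theorem sum_gibbs_le_sum_gibbs {d : ℕ} [Nonempty (Fin d)] {ε : Fin d → ℝ}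
    {s : Finset (Fin d)} (hs : ∀ i ∈ s, ∀ j ∈ sᶜ, ε j ≤ ε i) {βh βw : ℝ} (hβ : βh ≤ βw) :
    ∑ k ∈ s, gibbs βw ε k ≤ ∑ k ∈ s, gibbs βh ε k := by
  have partition_pos (β : ℝ) :
      0 < (∑ k ∈ sᶜ, exp (-β * ε k)) + ∑ k ∈ s, exp (-β * ε k) := by
    rw [sum_compl_add_sum]
    exact sum_pos (fun _ _ => exp_pos _) univ_nonempty
  rw [sum_gibbs_eq, sum_gibbs_eq]
  exact div_add_le_div_add_of_mul_le_mul (partition_pos βw) (partition_pos βh)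
    (sum_exp_mul_sum_exp_le hs hβ)

theorem gibbs_tail_sum_le_general {d : ℕ} (ε : Fin d → ℝ) (hε : Monotone ε)
    (βh βw : ℝ) (hβ : βh < βw) :
    ∀ n : Fin d,
      ∑ k ∈ Finset.Ici n, gibbs βw ε k ≤ ∑ k ∈ Finset.Ici n, gibbs βh ε k := by
  intro n
  have : Nonempty (Fin d) := ⟨n⟩
  refine sum_gibbs_le_sum_gibbs (fun i hi j hj => hε ?_) hβ.le
  rw [mem_compl, mem_Ici, not_le] at hj
  exact hj.le.trans (mem_Ici.mp hi)

/-- For nondecreasing energy levels and `β_h < β_w`, every tail sum of the warm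
Gibbs distribution is bounded by the corresponding tail sum of the hot one. -/
theorem gibbs_tail_sum_le {d : ℕ} (hd : 1 ≤ d) (ε : Fin d → ℝ) (hε : Monotone ε)
    (βh βw : ℝ) (hβ : βh < βw) :
    ∀ n : Fin d,
      ∑ k ∈ Finset.Ici n, gibbs βw ε k ≤ ∑ k ∈ Finset.Ici n, gibbs βh ε k :=
  gibbs_tail_sum_le_general ε hε βh βw hβ
end

section
/- Let ε : Fin d → ℝ be nondecreasing and let 0 < β_h < β_w < β. Let π^h, π^w, and π be the Gibbs distributions at β_h, β_w, and β, respectively. Then for every real number z, ∑_{n=1}^d |π^w_n − z·π_n| ≤ ∑_{n=1}^d |π^h_n − z·π_n|. (This is the statement that π^h thermomajorizes π^w with respect to π, expressed via the ℓ¹-distance characterization of thermomajorization.) -/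
open Finset Real

/-- Key monotonicity step: a ratio inequality between two exponentials with
different rates propagates to larger arguments. -/
lemma gibbs_step (β1 β2 c1 c2 x y : ℝ) (h12 : β1 ≤ β2) (hc2 : 0 ≤ c2) (hxy : x ≤ y)
    (h : c1 * Real.exp (-β2 * x) ≤ c2 * Real.exp (-β1 * x)) :
    c1 * Real.exp (-β2 * y) ≤ c2 * Real.exp (-β1 * y) := by
  have e1 : Real.exp (-β2 * y) = Real.exp (-β2 * x) * Real.exp (-β2 * (y - x)) := by
    rw [← Real.exp_add]; ring_nf
  have e2 : Real.exp (-β1 * y) = Real.exp (-β1 * x) * Real.exp (-β1 * (y - x)) := by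
    rw [← Real.exp_add]; ring_nf
  have h3 : Real.exp (-β2 * (y - x)) ≤ Real.exp (-β1 * (y - x)) :=
    Real.exp_le_exp.mpr (by nlinarith)
  have hp2 : (0:ℝ) < Real.exp (-β2 * (y - x)) := Real.exp_pos _
  have hp1 : (0:ℝ) ≤ c2 * Real.exp (-β1 * x) := mul_nonneg hc2 (Real.exp_pos _).le
  rw [e1, e2]
  calc c1 * (Real.exp (-β2 * x) * Real.exp (-β2 * (y - x)))
      = (c1 * Real.exp (-β2 * x)) * Real.exp (-β2 * (y - x)) := by ring
    _ ≤ (c2 * Real.exp (-β1 * x)) * Real.exp (-β2 * (y - x)) := by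
        exact mul_le_mul_of_nonneg_right h hp2.le
    _ ≤ (c2 * Real.exp (-β1 * x)) * Real.exp (-β1 * (y - x)) := by
        exact mul_le_mul_of_nonneg_left h3 hp1
    _ = c2 * (Real.exp (-β1 * x) * Real.exp (-β1 * (y - x))) := by ring

/-- Single-crossing plus equal sums gives comparison of positive parts. -/
lemma key_lemma {d : ℕ} (f g p : Fin d → ℝ)
    (hsum : ∑ n, f n = ∑ n, g n)
    (hS : ∀ n m : Fin d, n ≤ m → p n ≤ g n → p m ≤ g m)
    (hT : ∀ n m : Fin d, n ≤ m → g n ≤ f n → g m ≤ f m) :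
    ∑ n, max (g n - p n) 0 ≤ ∑ n, max (f n - p n) 0 := by
  classical
  set S : Finset (Fin d) := univ.filter (fun n => p n ≤ g n) with hSdef
  have hg_eq : ∑ n, max (g n - p n) 0 = ∑ n ∈ S, (g n - p n) := by
    rw [← Finset.sum_filter_add_sum_filter_not univ (fun n => p n ≤ g n)
      (fun n => max (g n - p n) 0)]
    have h1 : ∑ n ∈ S, max (g n - p n) 0 = ∑ n ∈ S, (g n - p n) := by
      apply Finset.sum_congr rfl
      intro n hn
      simp only [hSdef, mem_filter] at hn
      exact max_eq_left (by linarith [hn.2])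
    have h2 : ∑ n ∈ univ.filter (fun n => ¬ p n ≤ g n), max (g n - p n) 0 = 0 := by
      apply Finset.sum_eq_zero
      intro n hn
      simp only [mem_filter] at hn
      have := hn.2
      push_neg at this
      exact max_eq_right (by linarith)
    rw [h1, h2, add_zero]
  have hfg : 0 ≤ ∑ n ∈ S, (f n - g n) := by
    by_cases hc : ∀ n ∈ S, g n ≤ f n
    · exact Finset.sum_nonneg fun n hn => by linarith [hc n hn]
    · push_neg at hc
      obtain ⟨n0, hn0S, hn0⟩ := hc
      have hn0S' : p n0 ≤ g n0 := by
        simp only [hSdef, mem_filter] at hn0S; exact hn0S.2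
      have hout : ∀ m ∈ univ.filter (fun n => ¬ p n ≤ g n), f m - g m ≤ 0 := by
        intro m hm
        simp only [mem_filter] at hm
        have hmn0 : m ≤ n0 := by
          by_contra h
          push_neg at h
          exact hm.2 (hS n0 m h.le hn0S')
        by_contra h
        push_neg at h
        have := hT m n0 hmn0 (by linarith)
        linarith
      have hsplit : ∑ n ∈ S, (f n - g n)
          + ∑ n ∈ univ.filter (fun n => ¬ p n ≤ g n), (f n - g n) = 0 := by
        rw [Finset.sum_filter_add_sum_filter_not]
        rw [Finset.sum_sub_distrib, hsum, sub_self]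
      have hneg : ∑ n ∈ univ.filter (fun n => ¬ p n ≤ g n), (f n - g n) ≤ 0 :=
        Finset.sum_nonpos hout
      linarith
  calc ∑ n, max (g n - p n) 0 = ∑ n ∈ S, (g n - p n) := hg_eq
    _ ≤ ∑ n ∈ S, (f n - p n) := by
        rw [Finset.sum_sub_distrib, Finset.sum_sub_distrib]
        rw [Finset.sum_sub_distrib] at hfg
        linarith
    _ ≤ ∑ n ∈ S, max (f n - p n) 0 := Finset.sum_le_sum fun n _ => le_max_left _ _
    _ ≤ ∑ n, max (f n - p n) 0 :=
        Finset.sum_le_sum_of_subset_of_nonneg (filter_subset _ _)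
          (fun n _ _ => le_max_right _ _)

/-- For nondecreasing energy levels and `0 < β_h < β_w < β`, the hot Gibbs state
thermomajorizes the warm one with respect to the Gibbs state at `β`, expressed via
the ℓ¹-distance characterization. -/
theorem gibbs_thermomajorization {d : ℕ} (ε : Fin d → ℝ) (hε : Monotone ε)
    (βh βw β : ℝ) (h0 : 0 < βh) (hhw : βh < βw) (hwβ : βw < β) :
    ∀ z : ℝ,
      ∑ n, |gibbs βw ε n - z * gibbs β ε n| ≤ ∑ n, |gibbs βh ε n - z * gibbs β ε n| := by
  intro z
  rcases Nat.eq_zero_or_pos d with hd | hd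
  · subst hd; simp
  have hne : (univ : Finset (Fin d)).Nonempty := ⟨⟨0, hd⟩, mem_univ _⟩
  have hZ : ∀ b : ℝ, 0 < ∑ m, Real.exp (-b * ε m) := fun b =>
    Finset.sum_pos (fun m _ => Real.exp_pos _) hne
  have hsum1 : ∀ b : ℝ, ∑ n, gibbs b ε n = 1 := by
    intro b
    simp only [gibbs]
    rw [← Finset.sum_div, div_self (hZ b).ne']
  have hgibbs_eq : ∀ (b : ℝ) (c : ℝ) (n : Fin d),
      c * gibbs b ε n = (c / ∑ m, Real.exp (-b * ε m)) * Real.exp (-b * ε n) := by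
    intro b c n
    simp only [gibbs]
    ring
  have key := key_lemma (f := gibbs βh ε) (g := gibbs βw ε)
    (p := fun n => z * gibbs β ε n)
    (by rw [hsum1, hsum1])
    (by
      intro n m hnm h
      have h' :  (z / ∑ m, Real.exp (-β * ε m)) * Real.exp (-β * ε n)
          ≤ (1 / ∑ m, Real.exp (-βw * ε m)) * Real.exp (-βw * ε n) := by
        rw [← hgibbs_eq, ← hgibbs_eq]; simpa using h
      have := gibbs_step βw β (z / ∑ m, Real.exp (-β * ε m))
        (1 / ∑ m, Real.exp (-βw * ε m)) (ε n) (ε m) hwβ.le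
        (by positivity) (hε hnm) h'
      rw [← hgibbs_eq, ← hgibbs_eq] at this
      simpa using this)
    (by
      intro n m hnm h
      have h' :  (1 / ∑ m, Real.exp (-βw * ε m)) * Real.exp (-βw * ε n)
          ≤ (1 / ∑ m, Real.exp (-βh * ε m)) * Real.exp (-βh * ε n) := by
        rw [← hgibbs_eq, ← hgibbs_eq]; simpa using h
      have := gibbs_step βh βw (1 / ∑ m, Real.exp (-βw * ε m))
        (1 / ∑ m, Real.exp (-βh * ε m)) (ε n) (ε m) hhw.le
        (by positivity) (hε hnm) h'
      rw [← hgibbs_eq, ← hgibbs_eq] at this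
      simpa using this)
  have habs : ∀ x : ℝ, |x| = 2 * max x 0 - x := by
    intro x; rcases le_total x 0 with h | h
    · rw [abs_of_nonpos h, max_eq_right h]; ring
    · rw [abs_of_nonneg h, max_eq_left h]; ring
  have hw : ∑ n, (gibbs βw ε n - z * gibbs β ε n) = 1 - z := by
    rw [Finset.sum_sub_distrib, hsum1, ← Finset.mul_sum, hsum1]; ring
  have hh : ∑ n, (gibbs βh ε n - z * gibbs β ε n) = 1 - z := by
    rw [Finset.sum_sub_distrib, hsum1, ← Finset.mul_sum, hsum1]; ring
  have e1 : ∑ n, (2 * max (gibbs βw ε n - z * gibbs β ε n) 0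
      - (gibbs βw ε n - z * gibbs β ε n))
      = 2 * ∑ n, max (gibbs βw ε n - z * gibbs β ε n) 0 - (1 - z) := by
    rw [Finset.sum_sub_distrib, hw, Finset.mul_sum]
  have e2 : ∑ n, (2 * max (gibbs βh ε n - z * gibbs β ε n) 0
      - (gibbs βh ε n - z * gibbs β ε n))
      = 2 * ∑ n, max (gibbs βh ε n - z * gibbs β ε n) 0 - (1 - z) := by
    rw [Finset.sum_sub_distrib, hh, Finset.mul_sum]
  simp only [habs]
  rw [e1, e2]
  linarith
end

section
/- Let ε : Fin d → ℝ be nondecreasing and let β_h < β_w be real inverse temperatures, with Gibbs distributions π^h and π^w at β_h and β_w. Then there exists an index i ∈ {0, 1, …, d} such that π^h_k ≤ π^w_k for every k ≤ i and π^h_k ≥ π^w_k for every k > i. In particular the ratios π^h_k/π^w_k are nondecreasing in k, π^h_1 ≤ π^w_1, and π^h_d ≥ π^w_d. -/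
open Finset Real

/-- For nondecreasing energy levels and `β_h < β_w`, there is a crossing index `i`:
the hot Gibbs distribution is pointwise below the warm one on the first `i` levels and
pointwise above it on the remaining ones.  Moreover the ratios `π^h_k / π^w_k` are
nondecreasing in `k`, `π^h` is below `π^w` at the lowest level and above it at the
highest level. -/
theorem gibbs_single_crossing {d : ℕ} (hd : 0 < d) (ε : Fin d → ℝ) (hε : Monotone ε)
    (βh βw : ℝ) (hβ : βh < βw) :
    (∃ i ≤ d,
        (∀ k : Fin d, (k : ℕ) < i → gibbs βh ε k ≤ gibbs βw ε k) ∧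
        (∀ k : Fin d, i ≤ (k : ℕ) → gibbs βw ε k ≤ gibbs βh ε k)) ∧
      Monotone (fun k : Fin d => gibbs βh ε k / gibbs βw ε k) ∧
      gibbs βh ε ⟨0, hd⟩ ≤ gibbs βw ε ⟨0, hd⟩ ∧
      gibbs βw ε ⟨d - 1, Nat.sub_lt hd one_pos⟩ ≤ gibbs βh ε ⟨d - 1, Nat.sub_lt hd one_pos⟩ := by
  haveI : NeZero d := ⟨hd.ne'⟩
  have hne : (Finset.univ : Finset (Fin d)).Nonempty := univ_nonempty
  have hZ : ∀ β : ℝ, 0 < ∑ m, Real.exp (-β * ε m) :=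
    fun β => Finset.sum_pos (fun m _ => Real.exp_pos _) hne
  have hgpos : ∀ (β : ℝ) (k : Fin d), 0 < gibbs β ε k :=
    fun β k => div_pos (Real.exp_pos _) (hZ β)
  -- ratio formula
  have hr : ∀ k : Fin d, gibbs βh ε k / gibbs βw ε k =
      Real.exp ((βw - βh) * ε k) *
        ((∑ m, Real.exp (-βw * ε m)) / (∑ m, Real.exp (-βh * ε m))) := by
    intro k
    unfold gibbs
    rw [div_div_div_comm, ← Real.exp_sub, div_div_eq_mul_div, mul_div_assoc]
    congr 1
    ring
  have hmono : Monotone (fun k : Fin d => gibbs βh ε k / gibbs βw ε k) := by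
    intro j k hjk
    simp only [hr]
    apply mul_le_mul_of_nonneg_right
    · exact Real.exp_le_exp.mpr (mul_le_mul_of_nonneg_left (hε hjk) (by linarith))
    · exact le_of_lt (div_pos (hZ βw) (hZ βh))
  -- key propagation lemma
  have hkey : ∀ j k : Fin d, j ≤ k → gibbs βw ε j < gibbs βh ε j →
      gibbs βw ε k ≤ gibbs βh ε k := by
    intro j k hjk hlt
    have h1 : (1 : ℝ) < gibbs βh ε j / gibbs βw ε j :=
      (one_lt_div (hgpos βw j)).mpr hlt
    have h2 := hmono hjk
    have h3 : (1 : ℝ) ≤ gibbs βh ε k / gibbs βw ε k := le_trans h1.le h2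
    exact (one_le_div (hgpos βw k)).mp h3
  refine ⟨?_, hmono, ?_, ?_⟩
  · by_cases hall : ∀ k : Fin d, gibbs βh ε k ≤ gibbs βw ε k
    · exact ⟨d, le_rfl, fun k _ => hall k, fun k hk => absurd k.isLt (by omega)⟩
    · push_neg at hall
      obtain ⟨k1, hk1⟩ := hall
      set S : Finset (Fin d) := Finset.univ.filter (fun k => gibbs βw ε k < gibbs βh ε k)
      have hS : S.Nonempty := ⟨k1, by simp [S, hk1]⟩
      set k0 := S.min' hS
      have hk0mem : gibbs βw ε k0 < gibbs βh ε k0 := by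
        have := S.min'_mem hS
        simpa [S] using this
      refine ⟨(k0 : ℕ), le_of_lt k0.isLt, ?_, ?_⟩
      · intro k hk
        by_contra hc
        push_neg at hc
        have hkS : k ∈ S := by simp [S, hc]
        have := S.min'_le k hkS
        exact absurd hk (by omega)
      · intro k hk
        exact hkey k0 k (by exact hk) hk0mem
  · -- lowest level
    unfold gibbs
    rw [div_le_div_iff₀ (hZ βh) (hZ βw)]
    rw [Finset.mul_sum, Finset.mul_sum]
    apply Finset.sum_le_sum
    intro m _
    rw [← Real.exp_add, ← Real.exp_add]
    apply Real.exp_le_exp.mpr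
    have h0m : ε ⟨0, hd⟩ ≤ ε m := hε (Fin.mk_le_of_le_val (Nat.zero_le _))
    nlinarith [h0m, hβ]
  · -- highest level
    unfold gibbs
    rw [div_le_div_iff₀ (hZ βw) (hZ βh)]
    rw [Finset.mul_sum, Finset.mul_sum]
    apply Finset.sum_le_sum
    intro m _
    rw [← Real.exp_add, ← Real.exp_add]
    apply Real.exp_le_exp.mpr
    have hm : ε m ≤ ε ⟨d - 1, Nat.sub_lt hd one_pos⟩ :=
      hε (Fin.le_def.mpr (by have := m.isLt; simp only []; omega))
    nlinarith [hm, hβ]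
end

section
/- Let T : Matrix (Fin d) (Fin d) ℝ be column-stochastic, let p, q : Fin d → ℝ with p_n ≥ 0 and q_n > 0 for all n, and suppose (T q)_m > 0 for all m. Then for every function f : ℝ → ℝ that is convex on [0, ∞), the f-divergence is monotone under T: ∑_m (T q)_m · f((T p)_m / (T q)_m) ≤ ∑_n q_n · f(p_n / q_n). -/
open Finset

/-!
For each row `m`, Jensen's inequality with the weights `T m n * q n / (T q) m` (equivalently, joint
convexity of the perspective `(x, y) ↦ y * f (x / y)`) gives
`(T q) m * f ((T p) m / (T q) m) ≤ ∑ n, T m n * (q n * f (p n / q n))`.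
Summing over `m`, the column sums of `T` equal `1`, so the right-hand side collapses to the
`f`-divergence of `p` and `q`.
-/

/-- A matrix is column-stochastic if all entries are nonnegative and every
column sums to `1`. -/
def ColumnStochastic {d : ℕ} (T : Matrix (Fin d) (Fin d) ℝ) : Prop :=
  (∀ m n, 0 ≤ T m n) ∧ ∀ n, ∑ m, T m n = 1

theorem ConvexOn.perspective_sum_le {ι : Type*} {s : Set ℝ} {f : ℝ → ℝ} (hf : ConvexOn ℝ s f)
    {t : Finset ι} {w p q : ι → ℝ} (hw : ∀ i ∈ t, 0 ≤ w i) (hq : ∀ i ∈ t, 0 < q i)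
    (hpq : ∀ i ∈ t, p i / q i ∈ s) :
    (∑ i ∈ t, w i * q i) * f ((∑ i ∈ t, w i * p i) / ∑ i ∈ t, w i * q i) ≤
      ∑ i ∈ t, w i * (q i * f (p i / q i)) := by
  set Q := ∑ i ∈ t, w i * q i
  have hwq : ∀ i ∈ t, 0 ≤ w i * q i := fun i hi => mul_nonneg (hw i hi) (hq i hi).le
  rcases (sum_nonneg hwq).eq_or_lt with hQ | hQ
  · have hzero : ∀ i ∈ t, w i * q i = 0 := (sum_eq_zero_iff_of_nonneg hwq).1 hQ.symm
    rw [show Q = 0 from hQ.symm, zero_mul]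
    exact (sum_eq_zero fun i hi => by rw [← mul_assoc, hzero i hi, zero_mul]).ge
  have hjensen := hf.map_sum_le (t := t) (w := fun i => w i * q i / Q) (p := fun i => p i / q i)
    (fun i hi => div_nonneg (hwq i hi) hQ.le) (by rw [← sum_div, div_self hQ.ne']) hpq
  have hmean : ∑ i ∈ t, (w i * q i / Q) • (p i / q i) = (∑ i ∈ t, w i * p i) / Q := by
    rw [sum_div]
    refine sum_congr rfl fun i hi => ?_
    have := (hq i hi).ne'
    rw [smul_eq_mul]
    field_simp
  rw [hmean] at hjensen
  have hQne : Q ≠ 0 := hQ.ne'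
  calc Q * f ((∑ i ∈ t, w i * p i) / Q)
      ≤ Q * ∑ i ∈ t, (w i * q i / Q) • f (p i / q i) := mul_le_mul_of_nonneg_left hjensen hQ.le
    _ = ∑ i ∈ t, w i * (q i * f (p i / q i)) := by
      rw [mul_sum]
      refine sum_congr rfl fun i _ => ?_
      rw [smul_eq_mul]
      field_simp

theorem ColumnStochastic.sum_mulVec {d : ℕ} {T : Matrix (Fin d) (Fin d) ℝ}
    (hT : ColumnStochastic T) (v : Fin d → ℝ) : ∑ m, T.mulVec v m = ∑ n, v n := by
  simp only [Matrix.mulVec, dotProduct]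
  rw [sum_comm]
  simp [← sum_mul, hT.2]

theorem fDivergence_monotone_general {d : ℕ} (T : Matrix (Fin d) (Fin d) ℝ)
    (hT : ColumnStochastic T) (p q : Fin d → ℝ)
    (hp : ∀ n, 0 ≤ p n) (hq : ∀ n, 0 < q n)
    (f : ℝ → ℝ) (hf : ConvexOn ℝ (Set.Ici 0) f) :
    ∑ m, T.mulVec q m * f (T.mulVec p m / T.mulVec q m) ≤ ∑ n, q n * f (p n / q n) := by
  calc ∑ m, T.mulVec q m * f (T.mulVec p m / T.mulVec q m)
      ≤ ∑ m, T.mulVec (fun n => q n * f (p n / q n)) m :=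
        sum_le_sum fun m _ => hf.perspective_sum_le (t := univ) (w := T m) (fun n _ => hT.1 m n)
          (fun n _ => hq n) (fun n _ => div_nonneg (hp n) (hq n).le)
    _ = ∑ n, q n * f (p n / q n) := hT.sum_mulVec _

/-- Monotonicity of the `f`-divergence under column-stochastic matrices: for `f`
convex on `[0, ∞)`, applying a stochastic matrix to both arguments can only
decrease the `f`-divergence. -/
theorem fDivergence_monotone {d : ℕ} (T : Matrix (Fin d) (Fin d) ℝ)
    (hT : ColumnStochastic T) (p q : Fin d → ℝ)
    (hp : ∀ n, 0 ≤ p n) (hq : ∀ n, 0 < q n)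
    (hTq : ∀ m, 0 < T.mulVec q m)
    (f : ℝ → ℝ) (hf : ConvexOn ℝ (Set.Ici 0) f) :
    ∑ m, T.mulVec q m * f (T.mulVec p m / T.mulVec q m) ≤ ∑ n, q n * f (p n / q n) :=
  fDivergence_monotone_general T hT p q hp hq f hf
end

section
/- Let π, p, p′ : Fin d → ℝ be probability distributions with π_n > 0 for all n. If for every convex function f : ℝ → ℝ one has ∑_n π_n · f(p′_n/π_n) ≤ ∑_n π_n · f(p_n/π_n), then there exists a column-stochastic matrix T with T p = p′ and T π = π. (Equivalence of condition (b) and condition (a) in the characterization of the thermomajorization order p′ ≺_π p.) -/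
open Finset

/-- A probability distribution on `Fin d`. -/
def IsProbDist {d : ℕ} (p : Fin d → ℝ) : Prop :=
  (∀ n, 0 ≤ p n) ∧ ∑ n, p n = 1

/-- Condition (b) implies condition (a) in the characterization of the
thermomajorization order `p′ ≺_π p`: if every `f`-divergence (for convex `f`)
of `p′` from `π` is below that of `p`, then `p′` is obtained from `p` by a
column-stochastic matrix preserving `π`. -/
theorem convex_condition_implies_stochastic_map {d : ℕ}
    (π p p' : Fin d → ℝ) (hπ : IsProbDist π) (hp : IsProbDist p) (hp' : IsProbDist p')
    (hπpos : ∀ n, 0 < π n)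
    (h : ∀ f : ℝ → ℝ, ConvexOn ℝ Set.univ f →
      ∑ n, π n * f (p' n / π n) ≤ ∑ n, π n * f (p n / π n)) :
    ∃ T : Matrix (Fin d) (Fin d) ℝ,
      ColumnStochastic T ∧ T.mulVec p = p' ∧ T.mulVec π = π := by
  classical
  rcases isEmpty_or_nonempty (Fin d) with hE | hNE
  · exfalso
    have h2 := hπ.2
    rw [Finset.univ_eq_empty, Finset.sum_empty] at h2
    norm_num at h2
  -- the set of column stochastic matrices
  set K : Set (Matrix (Fin d) (Fin d) ℝ) := {T | ColumnStochastic T} with hKdef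
  -- the linear map T ↦ (T p, T π)
  set L : Matrix (Fin d) (Fin d) ℝ →ₗ[ℝ] (Fin d → ℝ) × (Fin d → ℝ) :=
    { toFun := fun T => (T.mulVec p, T.mulVec π)
      map_add' := by
        intro A B
        simp [Matrix.add_mulVec, Prod.ext_iff]
      map_smul' := by
        intro a A
        simp [Matrix.smul_mulVec, Prod.ext_iff] } with hLdef
  set S : Set ((Fin d → ℝ) × (Fin d → ℝ)) := L '' K with hSdef
  -- K is convex
  have hKconv : Convex ℝ K := by
    intro A hA B hB a b ha hb hab
    refine ⟨fun m n => ?_, fun n => ?_⟩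
    · have := hA.1 m n; have := hB.1 m n
      simp only [Matrix.add_apply, Matrix.smul_apply, smul_eq_mul]
      positivity
    · simp only [Matrix.add_apply, Matrix.smul_apply, smul_eq_mul]
      rw [Finset.sum_add_distrib, ← Finset.mul_sum, ← Finset.mul_sum, hA.2 n, hB.2 n]
      simpa using hab
  -- K is closed
  have hKclosed : IsClosed K := by
    have h1 : IsClosed {T : Matrix (Fin d) (Fin d) ℝ | ∀ m n, 0 ≤ T m n} := by
      have : {T : Matrix (Fin d) (Fin d) ℝ | ∀ m n, 0 ≤ T m n} =
          ⋂ m, ⋂ n, {T : Matrix (Fin d) (Fin d) ℝ | 0 ≤ T m n} := by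
        ext T; simp [Set.mem_iInter]
      rw [this]
      exact isClosed_iInter fun m => isClosed_iInter fun n =>
        isClosed_le continuous_const ((continuous_apply n).comp (continuous_apply m))
    have h2 : IsClosed {T : Matrix (Fin d) (Fin d) ℝ | ∀ n, ∑ m, T m n = 1} := by
      have : {T : Matrix (Fin d) (Fin d) ℝ | ∀ n, ∑ m, T m n = 1} =
          ⋂ n, {T : Matrix (Fin d) (Fin d) ℝ | ∑ m, T m n = 1} := by
        ext T; simp [Set.mem_iInter]
      rw [this]
      refine isClosed_iInter fun n => isClosed_eq ?_ continuous_const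
      exact continuous_finset_sum _ fun m _ => (continuous_apply n).comp (continuous_apply m)
    have : K = {T : Matrix (Fin d) (Fin d) ℝ | ∀ m n, 0 ≤ T m n} ∩
        {T : Matrix (Fin d) (Fin d) ℝ | ∀ n, ∑ m, T m n = 1} := by
      ext T; exact ⟨fun hT => ⟨hT.1, hT.2⟩, fun hT => ⟨hT.1, hT.2⟩⟩
    rw [this]; exact h1.inter h2
  -- K is compact
  have hKcomp : IsCompact K := by
    have hC : IsCompact (Set.univ.pi fun _ : Fin d =>
        Set.univ.pi fun _ : Fin d => Set.Icc (0:ℝ) 1) :=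
      isCompact_univ_pi fun _ => isCompact_univ_pi fun _ => isCompact_Icc
    refine hC.of_isClosed_subset hKclosed ?_
    intro T hT
    intro m _ n _
    refine ⟨hT.1 m n, ?_⟩
    calc T m n ≤ ∑ m', T m' n :=
          Finset.single_le_sum (fun i _ => hT.1 i n) (Finset.mem_univ m)
      _ = 1 := hT.2 n
  -- S is closed and convex
  have hSconv : Convex ℝ S := hKconv.linear_image L
  have hSclosed : IsClosed S := (hKcomp.image L.continuous_of_finiteDimensional).isClosed
  -- suppose (p', π) ∉ S
  by_contra hcon
  push_neg at hcon
  have hmem : (p', π) ∉ S := by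
    rintro ⟨T, hT, hTeq⟩
    simp only [hLdef, LinearMap.coe_mk, AddHom.coe_mk, Prod.ext_iff] at hTeq
    exact hcon T hT hTeq.1 hTeq.2
  obtain ⟨f, u, hfu, hfS⟩ := geometric_hahn_banach_point_closed hSconv hSclosed hmem
  set F : ((Fin d → ℝ) × (Fin d → ℝ)) →L[ℝ] ℝ := -f with hFdef
  have hFS : ∀ b ∈ S, F b < F (p', π) := by
    intro b hb
    have := hfS b hb
    simp only [hFdef, ContinuousLinearMap.neg_apply]
    linarith
  -- decompose F into coefficients
  set c : Fin d → ℝ := fun m => F (Pi.single m 1, 0) with hcdef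
  set μ : Fin d → ℝ := fun m => F (0, Pi.single m 1) with hμdef
  have hFexp : ∀ x y : Fin d → ℝ, F (x, y) = ∑ m, x m * c m + ∑ m, y m * μ m := by
    intro x y
    have hxy : (x, y) = ∑ m, (x m • ((Pi.single m 1 : Fin d → ℝ), (0 : Fin d → ℝ))
        + y m • ((0 : Fin d → ℝ), (Pi.single m 1 : Fin d → ℝ))) := by
      rw [Finset.sum_add_distrib]
      have fst : ∀ {s1 s2 : Fin d → (Fin d → ℝ) × (Fin d → ℝ)},
          (∑ i, s1 i + ∑ i, s2 i).1 = ∑ i, (s1 i).1 + ∑ i, (s2 i).1 := by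
        intro s1 s2; simp [Prod.fst_sum]
      ext i
      · rw [Prod.fst_add, Prod.fst_sum, Prod.fst_sum]
        simp [Finset.sum_apply, Pi.single_apply, mul_ite]
      · rw [Prod.snd_add, Prod.snd_sum, Prod.snd_sum]
        simp [Finset.sum_apply, Pi.single_apply, mul_ite]
    rw [hxy, map_sum]
    simp only [map_add, map_smul, smul_eq_mul]
    rw [Finset.sum_add_distrib]
  -- the convex piecewise affine function
  set g : ℝ → ℝ := fun x => Finset.univ.sup' Finset.univ_nonempty (fun m => μ m + c m * x)
    with hgdef
  have hg : ConvexOn ℝ Set.univ g := by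
    refine ⟨convex_univ, ?_⟩
    intro x _ y _ a b ha hb hab
    simp only [hgdef, smul_eq_mul]
    apply Finset.sup'_le
    intro m _
    have h1 : μ m + c m * x ≤ g x := Finset.le_sup' (fun m => μ m + c m * x) (Finset.mem_univ m)
    have h2 : μ m + c m * y ≤ g y := Finset.le_sup' (fun m => μ m + c m * y) (Finset.mem_univ m)
    have : μ m + c m * (a * x + b * y) = a * (μ m + c m * x) + b * (μ m + c m * y) := by
      linear_combination (-(μ m)) * hab
    rw [this]
    have := mul_le_mul_of_nonneg_left h1 ha
    have := mul_le_mul_of_nonneg_left h2 hb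
    linarith
  -- weights
  set w : Fin d → Fin d → ℝ := fun n m => c m * p n + μ m * π n with hwdef
  have hkey : ∀ n, π n * g (p n / π n) = Finset.univ.sup' Finset.univ_nonempty (w n) := by
    intro n
    have hπn := hπpos n
    rw [hgdef]
    rw [Finset.comp_sup'_eq_sup'_comp _ (fun z => π n * z)
      (fun x y => mul_max_of_nonneg x y hπn.le)]
    congr 1
    ext m
    simp only [Function.comp_apply, hwdef]
    field_simp
    ring
  -- chain 1 : F (p', π) ≤ ∑ π g (p'/π)
  have hchain1 : F (p', π) ≤ ∑ n, π n * g (p' n / π n) := by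
    rw [hFexp]
    have : ∀ m : Fin d, p' m * c m + π m * μ m ≤ π m * g (p' m / π m) := by
      intro m
      have hb : μ m + c m * (p' m / π m) ≤ g (p' m / π m) :=
        Finset.le_sup' (fun k => μ k + c k * (p' m / π m)) (Finset.mem_univ m)
      have hπm := hπpos m
      have := mul_le_mul_of_nonneg_left hb hπm.le
      calc p' m * c m + π m * μ m = π m * (μ m + c m * (p' m / π m)) := by
            field_simp; ring
        _ ≤ π m * g (p' m / π m) := this
    calc ∑ m, p' m * c m + ∑ m, π m * μ m = ∑ m, (p' m * c m + π m * μ m) := by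
          rw [Finset.sum_add_distrib]
      _ ≤ ∑ n, π n * g (p' n / π n) := Finset.sum_le_sum fun m _ => this m
  -- chain 2 : hypothesis
  have hchain2 : ∑ n, π n * g (p' n / π n) ≤ ∑ n, π n * g (p n / π n) := h g hg
  -- chain 3 : build the argmax matrix
  choose mx hmx1 hmx2 using fun n => Finset.exists_mem_eq_sup' Finset.univ_nonempty (w n)
  set T : Matrix (Fin d) (Fin d) ℝ := Matrix.of fun m n => if m = mx n then (1:ℝ) else 0
    with hTdef
  have hTcs : ColumnStochastic T := by
    constructor
    · intro m n; simp only [hTdef, Matrix.of_apply]; split <;> norm_num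
    · intro n; simp [hTdef]
  have hTS : L T ∈ S := ⟨T, hTcs, rfl⟩
  have hchain3 : ∑ n, π n * g (p n / π n) = F (L T) := by
    have e1 : ∀ v r : Fin d → ℝ,
        ∑ m, (∑ n, (if m = mx n then (1:ℝ) else 0) * v n) * r m
          = ∑ n, r (mx n) * v n := by
      intro v r
      simp_rw [Finset.sum_mul]
      rw [Finset.sum_comm]
      refine Finset.sum_congr rfl fun n _ => ?_
      simp [ite_mul, Finset.sum_ite_eq', mul_comm, mul_left_comm]
    have : F (L T) = ∑ n, w n (mx n) := by
      simp only [hLdef, LinearMap.coe_mk, AddHom.coe_mk]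
      rw [hFexp]
      simp only [Matrix.mulVec, dotProduct, hTdef, Matrix.of_apply]
      rw [e1 p c, e1 π μ, ← Finset.sum_add_distrib]
    rw [this]
    rw [Finset.sum_congr rfl fun n _ => (hkey n).trans (hmx2 n)]
  have hfinal := hFS (L T) hTS
  rw [← hchain3] at hfinal
  linarith
end

section
/- Let a, b, π : Fin d → ℝ with π_n > 0 for all n and ∑_n a_n = ∑_n b_n. If the inequality ∑_n |a_n − z·π_n| ≤ ∑_n |b_n − z·π_n| holds for every z in the finite set {a_k/π_k : k ∈ Fin d} ∪ {b_k/π_k : k ∈ Fin d}, then it holds for every z ∈ ℝ. (The ℓ¹ thermomajorization condition is sufficiently guaranteed by checking z at the breakpoints.) -/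
open Finset

private lemma abs_affine_aux {c z₁ z₂ t : ℝ} (h0 : 0 ≤ t) (h1 : t ≤ 1)
    (hz : z₁ ≤ z₂) (hc : c ≤ z₁ ∨ z₂ ≤ c) :
    |c - (t * z₁ + (1 - t) * z₂)| = t * |c - z₁| + (1 - t) * |c - z₂| := by
  have hzl : z₁ ≤ t * z₁ + (1 - t) * z₂ := by nlinarith
  have hzr : t * z₁ + (1 - t) * z₂ ≤ z₂ := by nlinarith
  rcases hc with hc | hc
  · rw [abs_of_nonpos (by linarith), abs_of_nonpos (by linarith),
      abs_of_nonpos (by linarith)]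
    ring
  · rw [abs_of_nonneg (by linarith), abs_of_nonneg (by linarith),
      abs_of_nonneg (by linarith)]
    ring

/-- Checking the ℓ¹ thermomajorization condition at the breakpoints
`z = a_k/π_k` and `z = b_k/π_k` suffices to establish it for all real `z`. -/
theorem l1_condition_from_breakpoints {d : ℕ} (a b π : Fin d → ℝ)
    (hπ : ∀ n, 0 < π n) (hsum : ∑ n, a n = ∑ n, b n)
    (h : ∀ z : ℝ, ((∃ k : Fin d, z = a k / π k) ∨ (∃ k : Fin d, z = b k / π k)) →
      ∑ n, |a n - z * π n| ≤ ∑ n, |b n - z * π n|) :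
    ∀ z : ℝ, ∑ n, |a n - z * π n| ≤ ∑ n, |b n - z * π n| := by
  intro z
  have hterm : ∀ (c : Fin d → ℝ) (w : ℝ) (n : Fin d),
      |c n - w * π n| = π n * |c n / π n - w| := by
    intro c w n
    have e : c n - w * π n = π n * (c n / π n - w) := by
      rw [mul_sub, mul_div_cancel₀ _ (hπ n).ne']
      ring
    rw [e, abs_mul, abs_of_pos (hπ n)]
  set S : Finset ℝ :=
      (univ.image fun k => a k / π k) ∪ (univ.image fun k => b k / π k) with hS
  have hmemS : ∀ s ∈ S, (∃ k : Fin d, s = a k / π k) ∨ (∃ k : Fin d, s = b k / π k) := by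
    intro s hs
    simp only [hS, mem_union, mem_image, mem_univ, true_and] at hs
    rcases hs with ⟨k, hk⟩ | ⟨k, hk⟩
    · exact Or.inl ⟨k, hk.symm⟩
    · exact Or.inr ⟨k, hk.symm⟩
  have haS : ∀ k : Fin d, a k / π k ∈ S := by
    intro k
    simp [hS]
  have hbS : ∀ k : Fin d, b k / π k ∈ S := by
    intro k
    simp [hS]
  -- case: all breakpoints are ≤ z
  have caseR : (∀ s ∈ S, s ≤ z) →
      ∑ n, |a n - z * π n| ≤ ∑ n, |b n - z * π n| := by
    intro hall
    have ea : ∑ n, |a n - z * π n| = ∑ n, (z * π n - a n) := by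
      apply sum_congr rfl
      intro n _
      have h1 : a n / π n ≤ z := hall _ (haS n)
      have h2 : a n ≤ z * π n := by
        rwa [div_le_iff₀ (hπ n)] at h1
      rw [abs_of_nonpos (by linarith)]
      ring
    have eb : ∑ n, |b n - z * π n| = ∑ n, (z * π n - b n) := by
      apply sum_congr rfl
      intro n _
      have h1 : b n / π n ≤ z := hall _ (hbS n)
      have h2 : b n ≤ z * π n := by
        rwa [div_le_iff₀ (hπ n)] at h1
      rw [abs_of_nonpos (by linarith)]
      ring
    rw [ea, eb, Finset.sum_sub_distrib, Finset.sum_sub_distrib, hsum]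
  -- case: all breakpoints are ≥ z
  have caseL : (∀ s ∈ S, z ≤ s) →
      ∑ n, |a n - z * π n| ≤ ∑ n, |b n - z * π n| := by
    intro hall
    have ea : ∑ n, |a n - z * π n| = ∑ n, (a n - z * π n) := by
      apply sum_congr rfl
      intro n _
      have h1 : z ≤ a n / π n := hall _ (haS n)
      have h2 : z * π n ≤ a n := by
        rwa [le_div_iff₀ (hπ n)] at h1
      rw [abs_of_nonneg (by linarith)]
    have eb : ∑ n, |b n - z * π n| = ∑ n, (b n - z * π n) := by
      apply sum_congr rfl
      intro n _
      have h1 : z ≤ b n / π n := hall _ (hbS n)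
      have h2 : z * π n ≤ b n := by
        rwa [le_div_iff₀ (hπ n)] at h1
      rw [abs_of_nonneg (by linarith)]
    rw [ea, eb, Finset.sum_sub_distrib, Finset.sum_sub_distrib, hsum]
  by_cases hT₁ : (S.filter (fun u => u ≤ z)).Nonempty
  · by_cases hT₂ : (S.filter (fun u => z ≤ u)).Nonempty
    · set z₁ := (S.filter (fun u => u ≤ z)).max' hT₁ with hz₁def
      set z₂ := (S.filter (fun u => z ≤ u)).min' hT₂ with hz₂def
      have hz₁mem := (S.filter (fun u => u ≤ z)).max'_mem hT₁
      have hz₂mem := (S.filter (fun u => z ≤ u)).min'_mem hT₂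
      rw [mem_filter] at hz₁mem hz₂mem
      have hz₁S : z₁ ∈ S := hz₁mem.1
      have hz₂S : z₂ ∈ S := hz₂mem.1
      have hz₁ : z₁ ≤ z := hz₁mem.2
      have hz₂ : z ≤ z₂ := hz₂mem.2
      have hsep : ∀ s ∈ S, s ≤ z₁ ∨ z₂ ≤ s := by
        intro s hs
        by_cases hc : s ≤ z
        · exact Or.inl (Finset.le_max' (S.filter (fun u => u ≤ z)) s (mem_filter.mpr ⟨hs, hc⟩))
        · exact Or.inr (Finset.min'_le (S.filter (fun u => z ≤ u)) s (mem_filter.mpr ⟨hs, le_of_lt (not_le.mp hc)⟩))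
      rcases eq_or_lt_of_le hz₁ with heq | hlt₁
      · exact h z (hmemS z (heq ▸ hz₁S))
      rcases eq_or_lt_of_le hz₂ with heq | hlt₂
      · exact h z (hmemS z (heq.symm ▸ hz₂S))
      set t : ℝ := (z₂ - z) / (z₂ - z₁) with htdef
      have hd12 : (0:ℝ) < z₂ - z₁ := by linarith
      have ht0 : 0 ≤ t := div_nonneg (by linarith) (by linarith)
      have ht1 : t ≤ 1 := by
        rw [htdef, div_le_one hd12]
        linarith
      have hzeq : z = t * z₁ + (1 - t) * z₂ := by
        rw [htdef]
        field_simp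
        ring
      have key : ∀ (c : Fin d → ℝ), (∀ n, c n / π n ∈ S) →
          ∑ n, |c n - z * π n| =
            t * ∑ n, |c n - z₁ * π n| + (1 - t) * ∑ n, |c n - z₂ * π n| := by
        intro c hc
        rw [Finset.mul_sum, Finset.mul_sum, ← Finset.sum_add_distrib]
        apply sum_congr rfl
        intro n _
        rw [hterm c z n, hterm c z₁ n, hterm c z₂ n, hzeq,
          abs_affine_aux ht0 ht1 (le_trans hz₁ hz₂) (hsep _ (hc n))]
        ring
      have ha1 := h z₁ (hmemS z₁ hz₁S)
      have ha2 := h z₂ (hmemS z₂ hz₂S)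
      rw [key a haS, key b hbS]
      have : (0:ℝ) ≤ 1 - t := by linarith
      exact add_le_add (mul_le_mul_of_nonneg_left ha1 ht0)
        (mul_le_mul_of_nonneg_left ha2 this)
    · apply caseR
      intro s hs
      by_contra hc
      exact hT₂ ⟨s, mem_filter.mpr ⟨hs, le_of_lt (not_le.mp hc)⟩⟩
  · apply caseL
    intro s hs
    by_contra hc
    exact hT₁ ⟨s, mem_filter.mpr ⟨hs, le_of_lt (not_le.mp hc)⟩⟩
end

section
/- Let π : Fin d → ℝ with π_n > 0 and ∑_n π_n = 1, let r : Fin d → ℝ with r ≠ 0 and ∑_n r_n = 0, and let c ∈ ℝ with c ≠ 0. Suppose that for every k: (i) ∑_n |c·r_n − (π_n/π_k)·r_k| ≤ ∑_n |r_n − (π_n/π_k)·r_k| and (ii) ∑_n |r_n − (π_n/π_k)·r_k| ≤ ∑_n |c⁻¹·r_n − (π_n/π_k)·r_k|, and that at least one of these inequalities (for some k, in family (i) or (ii)) is strict. Then |c| < 1. (With c = a₂^h/a₂^w, this shows the thermomajorization Mpemba effect in the long-time regime implies |a₂^h| < |a₂^w| in the nondegenerate case.) -/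
open Finset

private lemma aux_termwise {d : ℕ} (π r : Fin d → ℝ) (hπ : ∀ n, 0 < π n)
    (hπsum : ∑ n, π n = 1) (hrsum : ∑ n, r n = 0) (c : ℝ) (k : Fin d)
    (hk : ∀ n, r n * π k ≤ π n * r k)
    (h1k : ∑ n, |c * r n - (π n / π k) * r k| ≤ ∑ n, |r n - (π n / π k) * r k|) :
    ∀ n, c * r n * π k ≤ π n * r k := by
  have hπk := hπ k
  have hπk' : π k ≠ 0 := ne_of_gt hπk
  have hv : ∀ n, r n ≤ (π n / π k) * r k := by
    intro n
    rw [div_mul_eq_mul_div, le_div_iff₀ hπk]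
    exact hk n
  have hvsum : ∑ n, (π n / π k) * r k = r k / π k := by
    rw [← Finset.sum_mul, ← Finset.sum_div, hπsum]
    ring
  have hRHS : ∑ n, |r n - (π n / π k) * r k| = r k / π k := by
    have hcongr : ∀ n ∈ univ, |r n - (π n / π k) * r k| = (π n / π k) * r k - r n := by
      intro n _
      rw [abs_sub_comm, abs_of_nonneg (by linarith [hv n])]
    rw [Finset.sum_congr rfl hcongr, Finset.sum_sub_distrib, hvsum, hrsum, sub_zero]
  have hLHSlb : ∑ n, ((π n / π k) * r k - c * r n) = r k / π k := by
    have : ∑ n, c * r n = 0 := by rw [← Finset.mul_sum, hrsum, mul_zero]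
    rw [Finset.sum_sub_distrib, hvsum, this, sub_zero]
  have hterm : ∀ n, (0:ℝ) ≤ |c * r n - (π n / π k) * r k| - ((π n / π k) * r k - c * r n) := by
    intro n
    have := neg_abs_le (c * r n - (π n / π k) * r k)
    linarith
  have hsum0 : ∑ n, (|c * r n - (π n / π k) * r k| - ((π n / π k) * r k - c * r n)) ≤ 0 := by
    rw [Finset.sum_sub_distrib, hLHSlb]
    linarith [h1k, hRHS]
  intro n
  have h1 : |c * r n - (π n / π k) * r k| - ((π n / π k) * r k - c * r n) ≤ 0 :=
    le_trans (Finset.single_le_sum (fun i _ => hterm i) (Finset.mem_univ n)) hsum0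
  have h2 : c * r n ≤ (π n / π k) * r k := by
    have := le_abs_self (c * r n - (π n / π k) * r k)
    linarith
  have h3 := mul_le_mul_of_nonneg_right h2 hπk.le
  calc c * r n * π k ≤ (π n / π k) * r k * π k := h3
    _ = π n * r k := by field_simp

/-- If the long-time thermomajorization criterion holds at all the breakpoints,
with at least one strict inequality, then the ratio `c = a₂^h/a₂^w` of the
slowest-decay-mode coefficients satisfies `|c| < 1`. -/
theorem thermomajorization_implies_coefficient_lt {d : ℕ}
    (π r : Fin d → ℝ) (hπ : ∀ n, 0 < π n) (hπsum : ∑ n, π n = 1)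
    (hr : r ≠ 0) (hrsum : ∑ n, r n = 0)
    (c : ℝ) (hc : c ≠ 0)
    (h1 : ∀ k : Fin d,
      ∑ n, |c * r n - (π n / π k) * r k| ≤ ∑ n, |r n - (π n / π k) * r k|)
    (h2 : ∀ k : Fin d,
      ∑ n, |r n - (π n / π k) * r k| ≤ ∑ n, |c⁻¹ * r n - (π n / π k) * r k|)
    (hstrict : ∃ k : Fin d,
      (∑ n, |c * r n - (π n / π k) * r k| < ∑ n, |r n - (π n / π k) * r k|) ∨
      (∑ n, |r n - (π n / π k) * r k| < ∑ n, |c⁻¹ * r n - (π n / π k) * r k|)) :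
    |c| < 1 := by
  haveI hd : Nonempty (Fin d) := by
    by_contra h
    exact hr (funext fun n => absurd ⟨n⟩ h)
  -- existence of positive and negative entries of r
  have hpos : ∃ m, 0 < r m := by
    by_contra h
    push_neg at h
    apply hr
    funext n
    have := (Finset.sum_eq_zero_iff_of_nonpos (fun i _ => h i)).mp hrsum n (mem_univ n)
    simpa using this
  have hneg : ∃ m, r m < 0 := by
    by_contra h
    push_neg at h
    apply hr
    funext n
    have := (Finset.sum_eq_zero_iff_of_nonneg (fun i _ => h i)).mp hrsum n (mem_univ n)
    simpa using this
  obtain ⟨mp, hmp⟩ := hpos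
  obtain ⟨mn, hmn⟩ := hneg
  -- argmax and argmin of r n / π n
  obtain ⟨kM, -, hkM⟩ := Finset.exists_max_image univ (fun n => r n / π n) univ_nonempty
  obtain ⟨km, -, hkm⟩ := Finset.exists_min_image univ (fun n => r n / π n) univ_nonempty
  have hkM' : ∀ n, r n * π kM ≤ π n * r kM := by
    intro n
    have := hkM n (mem_univ n)
    rw [div_le_div_iff₀ (hπ n) (hπ kM)] at this
    linarith
  have hkm' : ∀ n, π n * r km ≤ r n * π km := by
    intro n
    have := hkm n (mem_univ n)
    rw [div_le_div_iff₀ (hπ km) (hπ n)] at this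
    linarith
  -- r kM > 0 and r km < 0
  have hrM : 0 < r kM := by
    have h := hkM' mp
    nlinarith [hπ mp, hπ kM, mul_pos hmp (hπ kM)]
  have hrm : r km < 0 := by
    have h := hkm' mn
    nlinarith [hπ mn, hπ km, mul_pos (hπ mn) (neg_pos.mpr hmn)]
  -- apply termwise lemma at the max
  have hMax : ∀ n, c * r n * π kM ≤ π n * r kM :=
    aux_termwise π r hπ hπsum hrsum c kM hkM' (h1 kM)
  -- apply termwise lemma to -r at the min
  have hrsum' : ∑ n, -r n = 0 := by
    rw [Finset.sum_neg_distrib, hrsum, neg_zero]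
  have hkneg : ∀ n, (-r n) * π km ≤ π n * (-r km) := by
    intro n
    have := hkm' n
    nlinarith
  have habs : ∀ (a : ℝ) (n : Fin d),
      |a * (-r n) - (π n / π km) * (-r km)| = |a * r n - (π n / π km) * r km| := by
    intro a n
    rw [show a * (-r n) - (π n / π km) * (-r km) = -(a * r n - (π n / π km) * r km) by ring,
      abs_neg]
  have habs1 : ∀ (n : Fin d),
      |(-r n) - (π n / π km) * (-r km)| = |r n - (π n / π km) * r km| := by
    intro n
    rw [show (-r n) - (π n / π km) * (-r km) = -(r n - (π n / π km) * r km) by ring, abs_neg]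
  have h1neg : ∑ n, |c * (-r n) - (π n / π km) * (-r km)|
      ≤ ∑ n, |(-r n) - (π n / π km) * (-r km)| := by
    calc ∑ n, |c * (-r n) - (π n / π km) * (-r km)|
        = ∑ n, |c * r n - (π n / π km) * r km| := by
          exact Finset.sum_congr rfl fun n _ => habs c n
      _ ≤ ∑ n, |r n - (π n / π km) * r km| := h1 km
      _ = ∑ n, |(-r n) - (π n / π km) * (-r km)| := by
          exact (Finset.sum_congr rfl fun n _ => (habs1 n)).symm
  have hMin' : ∀ n, c * (-r n) * π km ≤ π n * (-r km) :=
    aux_termwise π (fun n => -r n) hπ hπsum hrsum' c km hkneg h1neg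
  have hMin : ∀ n, π n * r km ≤ c * r n * π km := by
    intro n
    have h := hMin' n
    nlinarith
  -- c ≤ 1
  have hc1 : c ≤ 1 := by
    have h := hMax kM
    nlinarith [mul_pos hrM (hπ kM)]
  -- -1 ≤ c
  have hcm1 : -1 ≤ c := by
    have hB := hMax km
    have hD := hMin kM
    by_contra h
    push_neg at h
    nlinarith [mul_pos hrM (hπ km), mul_pos (neg_pos.mpr hrm) (hπ kM)]
  -- rule out c = 1 and c = -1
  have hne1 : c ≠ 1 := by
    intro hceq
    obtain ⟨k, hk⟩ := hstrict
    subst hceq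
    rcases hk with hk | hk <;> simp only [one_mul, inv_one] at hk <;> exact lt_irrefl _ hk
  have hnem1 : c ≠ -1 := by
    intro hceq
    obtain ⟨k, hk⟩ := hstrict
    subst hceq
    have hinv : ((-1 : ℝ))⁻¹ = -1 := by norm_num
    rcases hk with hk | hk
    · have := h2 k
      rw [hinv] at this
      linarith
    · have := h1 k
      rw [hinv] at hk
      linarith
  rw [abs_lt]
  exact ⟨lt_of_le_of_ne hcm1 (Ne.symm hnem1), lt_of_le_of_ne hc1 hne1⟩
end

section
/- There exist d ≥ 3, real inverse temperatures 0 < β_h < β_w < β, nondecreasing energy levels ε : Fin d → ℝ, a vector x : Fin d → ℝ, and an index k with the following properties, where π, π^w, π^h denote the Gibbs distributions at β, β_w, β_h respectively: (i) ∑_n π_n x_n = 0; (ii) |∑_n x_n π^w_n| > |∑_n x_n π^h_n| and ∑_n x_n π^w_n ≠ 0; (iii) with c := (∑_n x_n π^h_n)/(∑_n x_n π^w_n), one has ∑_n π_n |x_n − x_k| < ∑_n π_n |c·x_n − x_k|. (Hence the relation |a₂^h| < |a₂^w| between the slowest-decay-mode coefficients does not imply the long-time thermomajorization Mpemba criterion.)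 -/
open Finset Real

lemma exp_neg_log_zero (b : ℝ) : Real.exp (-Real.log b * 0) = 1 := by
  simp

lemma exp_neg_log_one {b : ℝ} (hb : 0 < b) : Real.exp (-Real.log b * 1) = b⁻¹ := by
  rw [mul_one, ← Real.log_inv, Real.exp_log (by positivity)]

lemma exp_neg_log_two {b : ℝ} (hb : 0 < b) : Real.exp (-Real.log b * 2) = (b ^ 2)⁻¹ := by
  have h : -Real.log b * 2 = Real.log ((b ^ 2)⁻¹) := by
    rw [Real.log_inv, Real.log_pow]; push_cast; ring
  rw [h, Real.exp_log (by positivity)]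

/-- There is an explicit instance where `|a₂^h| < |a₂^w|` (encoded by property (ii))
holds but the long-time thermomajorization criterion fails at some breakpoint
(property (iii)).  Hence `|a₂^h| < |a₂^w|` does not imply the thermomajorization
Mpemba effect in the long-time regime. -/
theorem coefficient_inequality_not_sufficient :
    ∃ (d : ℕ) (_ : 3 ≤ d) (βh βw β : ℝ) (ε x : Fin d → ℝ) (k : Fin d),
      0 < βh ∧ βh < βw ∧ βw < β ∧ Monotone ε ∧
      -- (i) orthogonality: ∑ π_n x_n = 0
      ∑ n, gibbs β ε n * x n = 0 ∧
      -- (ii) |a₂^w| > |a₂^h| and a₂^w ≠ 0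
      |∑ n, x n * gibbs βh ε n| < |∑ n, x n * gibbs βw ε n| ∧
      (∑ n, x n * gibbs βw ε n) ≠ 0 ∧
      -- (iii) the long-time thermomajorization criterion is violated at breakpoint k
      ∑ n, gibbs β ε n * |x n - x k| <
        ∑ n, gibbs β ε n *
          |((∑ m, x m * gibbs βh ε m) / (∑ m, x m * gibbs βw ε m)) * x n - x k| := by
  refine ⟨3, le_refl 3, Real.log 2, Real.log 3, Real.log 10,
    ![0, 1, 2], ![-1/10, 123/100, -23/10], 0, ?_, ?_, ?_, ?_, ?_, ?_, ?_, ?_⟩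
  · exact Real.log_pos (by norm_num)
  · exact Real.log_lt_log (by norm_num) (by norm_num)
  · exact Real.log_lt_log (by norm_num) (by norm_num)
  · intro a b hab
    fin_cases a <;> fin_cases b <;> simp_all
  all_goals
    simp only [gibbs, Fin.sum_univ_three, Matrix.cons_val_zero, Matrix.cons_val_one,
      Matrix.head_cons, Matrix.cons_val_two, Matrix.tail_cons,
      exp_neg_log_zero, exp_neg_log_one (by norm_num : (0:ℝ) < 2),
      exp_neg_log_two (by norm_num : (0:ℝ) < 2),
      exp_neg_log_one (by norm_num : (0:ℝ) < 3),
      exp_neg_log_two (by norm_num : (0:ℝ) < 3),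
      exp_neg_log_one (by norm_num : (0:ℝ) < 10),
      exp_neg_log_two (by norm_num : (0:ℝ) < 10)]
  · norm_num [abs_of_nonneg]
  · rw [show |(-1/10 * (1 / (1 + (3:ℝ)⁻¹ + (3^2)⁻¹)) + 123/100 * ((3:ℝ)⁻¹ / (1 + (3:ℝ)⁻¹ + (3^2)⁻¹)) + -23/10 * (((3:ℝ)^2)⁻¹ / (1 + (3:ℝ)⁻¹ + (3^2)⁻¹)))| = 49/1300 by rw [abs_of_nonneg] <;> norm_num]
    rw [show |(-1/10 * (1 / (1 + (2:ℝ)⁻¹ + (2^2)⁻¹)) + 123/100 * ((2:ℝ)⁻¹ / (1 + (2:ℝ)⁻¹ + (2^2)⁻¹)) + -23/10 * (((2:ℝ)^2)⁻¹ / (1 + (2:ℝ)⁻¹ + (2^2)⁻¹)))| = 6/175 by rw [abs_of_nonpos] <;> norm_num]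
    norm_num
  · norm_num [abs_of_nonneg]
  · norm_num [abs_of_nonneg]
end

section
/- Fix d ≥ 2, an inverse temperature β ∈ ℝ, energy levels ε : Fin d → ℝ, and a nonzero vector r : Fin d → ℝ with ∑_n r_n = 0. Then there exists a matrix W : Matrix (Fin d) (Fin d) ℝ and a strictly decreasing sequence of reals λ_1 > λ_2 > … > λ_d with λ_1 = 0 such that: (1) W_{mn} > 0 for all m ≠ n and every column of W sums to 0; (2) W satisfies detailed balance: W_{mn}·exp(−β ε_n) = W_{nm}·exp(−β ε_m) for all m, n; (3) the characteristic polynomial of W is ∏_{i=1}^d (X − λ_i), so the eigenvalues of W are exactly the distinct values λ_1, …, λ_d; (4) W·r = λ_2·r, i.e., r is a right eigenvector for the second largest eigenvalue λ_2. -/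
open Finset Real Polynomial Matrix

/-!
Put `u n = exp (-β ε n / 2)`, so that `r = u * v` with `u ⬝ᵥ v = ∑ r = 0`. Complete `u / ‖u‖` and
`v / ‖v‖` to an orthonormal basis, the columns of an orthogonal `U`, and let
`S = U diag(λ) Uᵀ` and `W = diag(u) S diag(u)⁻¹`. Then `W` is similar to `diag(λ)`, detailed
balance is the symmetry of `S`, the columns of `W` sum to `0` because `S u = λ₁ u = 0`, and
`W r = diag(u) S v = λ₂ r`. For `λ₁ = 0` and the other `λᵢ` close enough to `-1`, `S` is close to
`(u / ‖u‖)(u / ‖u‖)ᵀ - 1`, whose off-diagonal entries are positive.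
-/

namespace Matrix

variable {ι : Type*} [Fintype ι] [DecidableEq ι]

theorem exists_mem_orthogonalGroup_col_smul {u v : ι → ℝ} (hu : u ≠ 0) (hv : v ≠ 0)
    (huv : u ⬝ᵥ v = 0) {i j : ι} (hij : i ≠ j) :
    ∃ U ∈ orthogonalGroup ι ℝ, ∃ s t : ℝ, 0 < s ∧ u = s • U.col i ∧ v = t • U.col j := by
  set x : EuclideanSpace ℝ ι := WithLp.toLp 2 u
  set y : EuclideanSpace ℝ ι := WithLp.toLp 2 v
  have hx : x ≠ 0 := by simpa [x] using hu
  have hy : y ≠ 0 := by simpa [y] using hv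
  have hxy : inner ℝ x y = 0 := by
    simpa [x, y, PiLp.inner_apply, dotProduct, mul_comm] using huv
  set e : ι → EuclideanSpace ℝ ι := fun k => if k = i then ‖x‖⁻¹ • x else ‖y‖⁻¹ • y
  have he : Orthonormal ℝ (({i, j} : Set ι).domRestrict e) := by
    rw [orthonormal_iff_ite]
    rintro ⟨k, hk⟩ ⟨l, hl⟩
    simp only [Set.mem_insert_iff, Set.mem_singleton_iff] at hk hl
    rcases hk with rfl | rfl <;> rcases hl with rfl | rfl <;>
      simp [Set.domRestrict_apply, e, hij, hij.symm, real_inner_smul_left, real_inner_smul_right,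
        hxy, real_inner_comm x y, norm_smul, hx, hy]
  obtain ⟨b, hb⟩ := he.exists_orthonormalBasis_extension_of_card_eq (by simp)
  refine ⟨(EuclideanSpace.basisFun ι ℝ).toBasis.toMatrix b,
    (EuclideanSpace.basisFun ι ℝ).toMatrix_orthonormalBasis_mem_orthogonal b,
    ‖x‖, ‖y‖, norm_pos_iff.mpr hx, ?_, ?_⟩ <;> ext m
  · simp [Module.Basis.toMatrix_apply, col_apply, hb i (by simp), e, x, hx]
  · simp [Module.Basis.toMatrix_apply, col_apply, hb j (by simp), e, hij.symm, y, hy]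

section OrthogonalConj

variable {U : Matrix ι ι ℝ} (lam : ι → ℝ)

theorem transpose_mul_diagonal_mul_transpose :
    (U * diagonal lam * Uᵀ)ᵀ = U * diagonal lam * Uᵀ := by
  simp [transpose_mul, Matrix.mul_assoc]

theorem mul_diagonal_mul_transpose_mulVec_col (hU : U ∈ orthogonalGroup ι ℝ) (j : ι) :
    (U * diagonal lam * Uᵀ) *ᵥ U.col j = lam j • U.col j := by
  rw [← mulVec_single_one, mulVec_mulVec, Matrix.mul_assoc, Matrix.mul_assoc,
    (mem_orthogonalGroup_iff' ι ℝ).mp hU, Matrix.mul_one, ← mulVec_mulVec,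
    diagonal_mulVec_single, mul_one, mulVec_single, op_smul_eq_smul, mulVec_single_one]

theorem charpoly_mul_diagonal_mul_transpose (hU : U ∈ orthogonalGroup ι ℝ) :
    (U * diagonal lam * Uᵀ).charpoly = ∏ i, (X - C (lam i)) := by
  rw [charpoly_mul_comm, ← Matrix.mul_assoc, (mem_orthogonalGroup_iff' ι ℝ).mp hU,
    Matrix.one_mul, charpoly_diagonal]

theorem mul_diagonal_mul_transpose_apply (m n : ι) :
    (U * diagonal lam * Uᵀ) m n = ∑ i, lam i * (U m i * U n i) := by
  rw [mul_apply]
  simp only [mul_diagonal, transpose_apply]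
  exact sum_congr rfl fun i _ => by ring

theorem sum_abs_mul_le_one_of_mem_orthogonalGroup (hU : U ∈ orthogonalGroup ι ℝ) (m n : ι) :
    ∑ i, |U m i * U n i| ≤ 1 := by
  have hrow (k : ι) : ∑ i, U k i ^ 2 = 1 := by
    simpa [mul_apply, sq] using congr_fun₂ ((mem_orthogonalGroup_iff ι ℝ).mp hU) k k
  calc ∑ i, |U m i * U n i| ≤ ∑ i, (U m i ^ 2 + U n i ^ 2) / 2 := by
        refine sum_le_sum fun i _ => ?_
        rw [abs_mul, le_div_iff₀ two_pos, ← sq_abs (U m i), ← sq_abs (U n i)]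
        nlinarith [two_mul_le_add_sq |U m i| |U n i|]
    _ = 1 := by rw [← sum_div, sum_add_distrib, hrow, hrow]; norm_num

theorem mul_diagonal_mul_transpose_apply_of_ne (hU : U ∈ orthogonalGroup ι ℝ) {i₀ : ι}
    (h0 : lam i₀ = 0) {m n : ι} (hmn : m ≠ n) :
    (U * diagonal lam * Uᵀ) m n
      = U m i₀ * U n i₀ + ∑ i ∈ univ.erase i₀, (lam i + 1) * (U m i * U n i) := by
  have horth : ∑ i, U m i * U n i = 0 := by
    simpa [mul_apply, hmn] using congr_fun₂ ((mem_orthogonalGroup_iff ι ℝ).mp hU) m n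
  calc (U * diagonal lam * Uᵀ) m n = ∑ i, (lam i + 1) * (U m i * U n i) := by
        simp only [mul_diagonal_mul_transpose_apply, add_mul, one_mul, sum_add_distrib, horth,
          add_zero]
    _ = _ := by rw [← add_sum_erase _ _ (mem_univ i₀), h0, zero_add, one_mul]

theorem mul_diagonal_mul_transpose_apply_pos (hU : U ∈ orthogonalGroup ι ℝ) {i₀ : ι}
    (h0 : lam i₀ = 0) {δ : ℝ} (hδ0 : 0 ≤ δ) (hδ : ∀ i ≠ i₀, |lam i + 1| ≤ δ) {m n : ι}
    (hmn : m ≠ n) (hlt : δ < U m i₀ * U n i₀) : 0 < (U * diagonal lam * Uᵀ) m n := by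
  have hbound : |∑ i ∈ univ.erase i₀, (lam i + 1) * (U m i * U n i)| ≤ δ :=
    calc _ ≤ ∑ i ∈ univ.erase i₀, δ * |U m i * U n i| := by
          refine (abs_sum_le_sum_abs _ _).trans (sum_le_sum fun i hi => ?_)
          rw [abs_mul]
          exact mul_le_mul_of_nonneg_right (hδ i (ne_of_mem_erase hi)) (abs_nonneg _)
      _ ≤ ∑ i, δ * |U m i * U n i| :=
          sum_le_sum_of_subset_of_nonneg (erase_subset _ _)
            fun _ _ _ => mul_nonneg hδ0 (abs_nonneg _)
      _ = δ * ∑ i, |U m i * U n i| := (mul_sum _ _ _).symm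
      _ ≤ δ := mul_le_of_le_one_right hδ0 (sum_abs_mul_le_one_of_mem_orthogonalGroup hU m n)
  rw [mul_diagonal_mul_transpose_apply_of_ne lam hU h0 hmn]
  linarith [neg_abs_le (∑ i ∈ univ.erase i₀, (lam i + 1) * (U m i * U n i))]

theorem exists_forall_mul_diagonal_mul_transpose_pos (hU : U ∈ orthogonalGroup ι ℝ) {i₀ : ι}
    (hpos : ∀ m, 0 < U m i₀) :
    ∃ δ > 0, ∀ lam : ι → ℝ, lam i₀ = 0 → (∀ i ≠ i₀, |lam i + 1| ≤ δ) →
      ∀ m n, m ≠ n → 0 < (U * diagonal lam * Uᵀ) m n := by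
  have : Nonempty ι := ⟨i₀⟩
  obtain ⟨⟨m₀, n₀⟩, hmin⟩ := Finite.exists_min fun p : ι × ι => U p.1 i₀ * U p.2 i₀
  have hc : 0 < U m₀ i₀ * U n₀ i₀ := mul_pos (hpos m₀) (hpos n₀)
  refine ⟨U m₀ i₀ * U n₀ i₀ / 2, half_pos hc, fun lam h0 hδ m n hmn => ?_⟩
  exact mul_diagonal_mul_transpose_apply_pos lam hU h0 (half_pos hc).le hδ hmn
    (by linarith [hmin (m, n)])

end OrthogonalConj

section DiagonalConj

variable {u : ι → ℝ} {S : Matrix ι ι ℝ}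

theorem diagonal_inv_mul_diagonal (hu : ∀ n, u n ≠ 0) : diagonal u⁻¹ * diagonal u = 1 := by
  rw [diagonal_mul_diagonal, ← diagonal_one]
  exact congr_arg diagonal (funext fun n => inv_mul_cancel₀ (hu n))

variable (u S) in
theorem diagonal_mul_mul_diagonal_inv_apply (m n : ι) :
    (diagonal u * S * diagonal u⁻¹) m n = u m * S m n / u n := by
  simp [mul_diagonal, diagonal_mul, div_eq_mul_inv]

theorem diagonal_mul_mul_diagonal_inv_apply_mul_sq (hu : ∀ n, u n ≠ 0) (hS : Sᵀ = S)
    (m n : ι) :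
    (diagonal u * S * diagonal u⁻¹) m n * u n ^ 2
      = (diagonal u * S * diagonal u⁻¹) n m * u m ^ 2 := by
  rw [diagonal_mul_mul_diagonal_inv_apply, diagonal_mul_mul_diagonal_inv_apply,
    ← transpose_apply S n m, hS]
  field_simp [hu m, hu n]

theorem sum_diagonal_mul_mul_diagonal_inv_apply (hS : Sᵀ = S) (hSu : S *ᵥ u = 0) (n : ι) :
    ∑ m, (diagonal u * S * diagonal u⁻¹) m n = 0 := by
  have h : u ᵥ* S = 0 := by rw [← hS, vecMul_transpose, hSu]
  simp_rw [diagonal_mul_mul_diagonal_inv_apply, ← sum_div]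
  exact div_eq_zero_iff.mpr (Or.inl (congr_fun h n))

theorem diagonal_mul_mul_diagonal_inv_mulVec (hu : ∀ n, u n ≠ 0) {v : ι → ℝ} {μ : ℝ}
    (hSv : S *ᵥ v = μ • v) :
    (diagonal u * S * diagonal u⁻¹) *ᵥ (u * v) = μ • (u * v) := by
  have hDv : u * v = diagonal u *ᵥ v := by ext; simp [mulVec_diagonal]
  rw [hDv, mulVec_mulVec, Matrix.mul_assoc, diagonal_inv_mul_diagonal hu, Matrix.mul_one,
    ← mulVec_mulVec, hSv, mulVec_smul]

theorem charpoly_diagonal_mul_mul_diagonal_inv (hu : ∀ n, u n ≠ 0) :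
    (diagonal u * S * diagonal u⁻¹).charpoly = S.charpoly := by
  rw [charpoly_mul_comm, ← Matrix.mul_assoc, diagonal_inv_mul_diagonal hu, Matrix.one_mul]

end DiagonalConj

end Matrix

theorem exists_strictAnti_eq_zero_abs_add_one_le {d : ℕ} (hd : 0 < d) {δ : ℝ} (hδ : 0 < δ) :
    ∃ lam : Fin d → ℝ, StrictAnti lam ∧ lam ⟨0, hd⟩ = 0 ∧ ∀ i ≠ ⟨0, hd⟩, |lam i + 1| ≤ δ := by
  set t := min δ (1 / 2)
  have ht0 : 0 < t := lt_min hδ one_half_pos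
  have ht1 : t < 1 := (min_le_right _ _).trans_lt (by norm_num)
  refine ⟨fun i => t ^ (i : ℕ) - 1, fun i j hij => ?_, by simp, fun i hi => ?_⟩
  · simpa using pow_right_strictAnti₀ ht0 ht1 hij
  · rw [sub_add_cancel, abs_of_pos (pow_pos ht0 _)]
    exact (pow_le_of_le_one ht0.le ht1.le (by simpa [Fin.ext_iff] using hi)).trans
      (min_le_left _ _)

/-- For any inverse temperature, energy levels, and nonzero vector `r` with zero sum,
there exists a nondegenerate detailed-balanced transition (rate) matrix having `r`
as the right eigenvector of its second largest eigenvalue. -/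
theorem exists_transition_matrix_with_eigenvector {d : ℕ} (hd : 2 ≤ d)
    (β : ℝ) (ε : Fin d → ℝ) (r : Fin d → ℝ) (hr : r ≠ 0) (hrsum : ∑ n, r n = 0) :
    ∃ (W : Matrix (Fin d) (Fin d) ℝ) (lam : Fin d → ℝ),
      StrictAnti lam ∧ lam ⟨0, by omega⟩ = 0 ∧
      -- (1) transition rate matrix: positive off-diagonal entries, columns sum to zero
      (∀ m n, m ≠ n → 0 < W m n) ∧ (∀ n, ∑ m, W m n = 0) ∧
      -- (2) detailed balance with respect to the Gibbs distribution at β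
      (∀ m n, W m n * Real.exp (-β * ε n) = W n m * Real.exp (-β * ε m)) ∧
      -- (3) the eigenvalues of W are exactly the distinct values λ_1, …, λ_d
      W.charpoly = ∏ i, (X - C (lam i)) ∧
      -- (4) r is a right eigenvector for the second largest eigenvalue λ_2
      W.mulVec r = lam ⟨1, by omega⟩ • r := by
  set u : Fin d → ℝ := fun n => exp (-β * ε n / 2)
  have hu (n : Fin d) : 0 < u n := exp_pos _
  have hu_sq (n : Fin d) : u n ^ 2 = exp (-β * ε n) := by rw [← exp_nat_mul]; ring_nf
  have hr_eq : r = u * (r / u) := by ext n; simp [mul_div_cancel₀ _ (hu n).ne']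
  obtain ⟨U, hU, s, t, hs, hus, hvt⟩ :=
    exists_mem_orthogonalGroup_col_smul (u := u) (v := r / u)
      (fun h => (hu ⟨0, by omega⟩).ne' (congr_fun h _))
      (fun h => hr (by rw [hr_eq, h, mul_zero])) (by rw [hr_eq] at hrsum; exact hrsum)
      (i := ⟨0, by omega⟩) (j := ⟨1, by omega⟩) (by simp)
  obtain ⟨δ, hδ, hS_pos⟩ := exists_forall_mul_diagonal_mul_transpose_pos hU
    fun m => pos_of_mul_pos_right (by simpa [hus] using hu m) hs.le
  obtain ⟨lam, hanti, h0, hlam⟩ := exists_strictAnti_eq_zero_abs_add_one_le (d := d) (by omega) hδ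
  have hS := transpose_mul_diagonal_mul_transpose (U := U) lam
  have hu_ne (n : Fin d) : u n ≠ 0 := (hu n).ne'
  refine ⟨diagonal u * (U * diagonal lam * Uᵀ) * diagonal u⁻¹, lam, hanti, h0,
    fun m n hmn => ?_, sum_diagonal_mul_mul_diagonal_inv_apply hS ?_, fun m n => ?_, ?_, ?_⟩
  · rw [diagonal_mul_mul_diagonal_inv_apply]
    exact div_pos (mul_pos (hu m) (hS_pos lam h0 hlam m n hmn)) (hu n)
  · rw [hus, mulVec_smul, mul_diagonal_mul_transpose_mulVec_col lam hU, h0, zero_smul, smul_zero]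
  · rw [← hu_sq, ← hu_sq]
    exact diagonal_mul_mul_diagonal_inv_apply_mul_sq hu_ne hS m n
  · rw [charpoly_diagonal_mul_mul_diagonal_inv hu_ne, charpoly_mul_diagonal_mul_transpose lam hU]
  · rw [hr_eq]
    refine diagonal_mul_mul_diagonal_inv_mulVec hu_ne ?_
    rw [hvt, mulVec_smul, mul_diagonal_mul_transpose_mulVec_col lam hU, smul_comm]
end

section
/- Let π, π^h, π^w : Fin d → ℝ with π_n > 0 for all n. Let V ⊆ (Fin d → ℝ) be the span of π^h and π with respect to the standard Euclidean inner product, let P be the orthogonal projection onto V, and define r : Fin d → ℝ by r_n := π_n · (π^w_n − (P π^w)_n). Then: (i) ∑_n r_n = 0; (ii) ∑_n r_n · π_n⁻¹ · π^h_n = 0; (iii) ∑_n r_n · π_n⁻¹ · π^w_n = ‖π^w − P π^w‖² ≥ 0, with strict inequality iff π^w ∉ V. (Hence, for the transition matrix with second eigenvector r, the slowest-decay coefficients satisfy a₂^h = 0 and a₂^w > 0 when π^w ∉ V.) -/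
/-!
Since `r = Π w` with `w = π^w - P π^w`, the `Π⁻¹`-weighted pairing of `r` with any vector `x` is
the Euclidean inner product `⟪w, x⟫`. The residual `w` is orthogonal to `V`, which contains `π` and
`π^h`, and `⟪w, π^w⟫ = ⟪w, w⟫` because `P π^w ∈ V`.
-/

open Finset

open scoped InnerProductSpace

theorem Submodule.inner_sub_starProjection_self {𝕜 E : Type*} [RCLike 𝕜]
    [NormedAddCommGroup E] [InnerProductSpace 𝕜 E] (K : Submodule 𝕜 E)
    [K.HasOrthogonalProjection] (v : E) :
    ⟪v - K.starProjection v, v⟫_𝕜 = (‖v - K.starProjection v‖ ^ 2 : 𝕜) := by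
  calc ⟪v - K.starProjection v, v⟫_𝕜
      = ⟪v - K.starProjection v, v - K.starProjection v + K.starProjection v⟫_𝕜 := by
        rw [sub_add_cancel]
    _ = (‖v - K.starProjection v‖ ^ 2 : 𝕜) := by
      rw [inner_add_right, K.starProjection_inner_eq_zero v _ (K.starProjection_apply_mem v),
        add_zero, inner_self_eq_norm_sq_to_K]

theorem EuclideanSpace.sum_mul_mul_inv_mul_eq_inner {ι : Type*} [Fintype ι] {π : ι → ℝ}
    (hπ : ∀ n, π n ≠ 0) (w x : EuclideanSpace ℝ ι) :
    ∑ n, π n * w n * (π n)⁻¹ * x n = ⟪w, x⟫_ℝ := by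
  rw [PiLp.inner_apply]
  refine sum_congr rfl fun n _ => ?_
  rw [mul_comm (π n), mul_inv_cancel_right₀ (hπ n), Real.inner_apply]

/-- Construction for Result 5: with `r_n = π_n (π^w_n − (P π^w)_n)`, where `P` is
the orthogonal projection onto the span `V` of `π^h` and `π`, the vector `r` has
zero sum, is orthogonal to `π^h` in the `Π⁻¹` inner product (so `a₂^h = 0`), and
has nonnegative `Π⁻¹`-pairing with `π^w`, strictly positive iff `π^w ∉ V`. -/
theorem projection_construction {d : ℕ}
    (π πh πw : EuclideanSpace ℝ (Fin d)) (hπ : ∀ n, 0 < π n)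
    (V : Submodule ℝ (EuclideanSpace ℝ (Fin d)))
    (hV : V = Submodule.span ℝ ({πh, π} : Set (EuclideanSpace ℝ (Fin d))))
    (r : Fin d → ℝ)
    (hr : ∀ n, r n = π n * (πw n - (V.orthogonalProjection πw : EuclideanSpace ℝ (Fin d)) n)) :
    (∑ n, r n = 0) ∧
    (∑ n, r n * (π n)⁻¹ * πh n = 0) ∧
    (∑ n, r n * (π n)⁻¹ * πw n
        = ‖πw - (V.orthogonalProjection πw : EuclideanSpace ℝ (Fin d))‖ ^ 2) ∧
    (0 ≤ ∑ n, r n * (π n)⁻¹ * πw n) ∧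
    (0 < ∑ n, r n * (π n)⁻¹ * πw n ↔ πw ∉ V) := by
  set w := πw - V.starProjection πw
  have hw : w ∈ Vᗮ := V.sub_starProjection_mem_orthogonal πw
  have pairing (x : EuclideanSpace ℝ (Fin d)) : ∑ n, r n * (π n)⁻¹ * x n = ⟪w, x⟫_ℝ := by
    simp only [hr]
    exact EuclideanSpace.sum_mul_mul_inv_mul_eq_inner (fun n => (hπ n).ne') w x
  have hπV : π ∈ V := hV ▸ Submodule.subset_span (by simp)
  have hπhV : πh ∈ V := hV ▸ Submodule.subset_span (by simp)
  have hsum : ∑ n, r n = ∑ n, r n * (π n)⁻¹ * π n :=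
    sum_congr rfl fun n _ => (inv_mul_cancel_right₀ (hπ n).ne' (r n)).symm
  have hnorm : ⟪w, πw⟫_ℝ = ‖w‖ ^ 2 := V.inner_sub_starProjection_self πw
  refine ⟨?_, ?_, ?_, ?_, ?_⟩
  · rw [hsum, pairing, inner_eq_zero_symm.mp (hw π hπV)]
  · rw [pairing, inner_eq_zero_symm.mp (hw πh hπhV)]
  · rw [pairing, hnorm]; rfl
  · rw [pairing, hnorm]; positivity
  · rw [pairing, hnorm, sq_pos_iff, norm_ne_zero_iff, Ne, sub_eq_zero, eq_comm,
      V.starProjection_eq_self_iff]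
end

section
/- Let β₁ < β₂ < β₃ be real numbers and let ε : Fin d → ℝ take at least three distinct values (i.e., there exist indices n₁, n₂, n₃ with ε_{n₁}, ε_{n₂}, ε_{n₃} pairwise distinct). Then the three vectors g_i : Fin d → ℝ defined by (g_i)_n := exp(−β_i ε_n), i = 1, 2, 3, are linearly independent over ℝ. In particular, the Gibbs distributions at three distinct inverse temperatures are linearly independent. -/
/-!
An exponential sum `t ↦ ∑ i, c i * exp (b i * t)` with `n` distinct exponents and `n` distinct
real zeros vanishes identically. Multiplying by `exp (-(b 0 * t))` does not move the zeros and
turns the `0`-th term into a constant; by Rolle's theorem the derivative, an exponential sum with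
`n - 1` distinct exponents, has `n - 1` zeros interlacing the given ones, and induction applies.
A linear relation among the Gibbs vectors is such a sum, vanishing at three distinct energies.
-/

open Finset Real Function

theorem exists_strictMono_deriv_eq_zero {f : ℝ → ℝ} (hf : Continuous f) {n : ℕ}
    {x : Fin (n + 1) → ℝ} (hx : StrictMono x) (hfx : ∀ i, f (x i) = 0) :
    ∃ y : Fin n → ℝ, StrictMono y ∧ ∀ i, deriv f (y i) = 0 := by
  have hrolle (i : Fin n) : ∃ y ∈ Set.Ioo (x i.castSucc) (x i.succ), deriv f y = 0 :=
    exists_deriv_eq_zero (hx i.castSucc_lt_succ) hf.continuousOn ((hfx _).trans (hfx _).symm)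
  choose y hy hy' using hrolle
  refine ⟨y, fun i j hij => ?_, hy'⟩
  calc y i < x i.succ := (hy i).2
    _ ≤ x j.castSucc := hx.monotone (Fin.succ_le_castSucc_iff.2 hij)
    _ < y j := (hy j).1

theorem hasDerivAt_sum_mul_exp {ι : Type*} (s : Finset ι) (b c : ι → ℝ) (t : ℝ) :
    HasDerivAt (fun t => ∑ i ∈ s, c i * exp (b i * t)) (∑ i ∈ s, c i * b i * exp (b i * t)) t :=
  HasDerivAt.fun_sum fun i _ =>
    ((((hasDerivAt_id' t).const_mul (b i)).exp).const_mul (c i)).congr_deriv (by ring)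

theorem sum_mul_exp_sub_mul {ι : Type*} (s : Finset ι) (b c : ι → ℝ) (a t : ℝ) :
    ∑ i ∈ s, c i * exp ((b i - a) * t) = exp (-(a * t)) * ∑ i ∈ s, c i * exp (b i * t) := by
  rw [mul_sum]
  refine sum_congr rfl fun i _ => ?_
  rw [sub_mul, sub_eq_add_neg, exp_add]; ring

theorem eq_zero_of_sum_mul_exp_eq_zero_of_strictMono {n : ℕ} {b : Fin n → ℝ} (hb : Injective b)
    {x : Fin n → ℝ} (hx : StrictMono x) {c : Fin n → ℝ}
    (hc : ∀ j, ∑ i, c i * exp (b i * x j) = 0) : c = 0 := by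
  induction n with
  | zero => exact Subsingleton.elim _ _
  | succ n ih =>
    set b' : Fin (n + 1) → ℝ := fun i => b i - b 0
    have hb'0 : b' 0 = 0 := sub_self _
    have hb'succ : Injective fun i : Fin n => b' i.succ :=
      fun i j h => Fin.succ_injective _ (hb (sub_left_injective h))
    have hc' (j : Fin (n + 1)) : ∑ i, c i * exp (b' i * x j) = 0 := by
      rw [sum_mul_exp_sub_mul, hc, mul_zero]
    have hderiv (t : ℝ) : HasDerivAt (fun t => ∑ i, c i * exp (b' i * t))
        (∑ i : Fin n, c i.succ * b' i.succ * exp (b' i.succ * t)) t := by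
      simpa [Fin.sum_univ_succ, hb'0] using hasDerivAt_sum_mul_exp univ b' c t
    obtain ⟨y, hy, hy0⟩ := exists_strictMono_deriv_eq_zero
      (continuous_iff_continuousAt.2 fun t => (hderiv t).continuousAt) hx hc'
    have hsucc : (fun i : Fin n => c i.succ * b' i.succ) = 0 :=
      ih hb'succ hy fun j => (hderiv (y j)).deriv ▸ hy0 j
    have hc_succ (i : Fin n) : c i.succ = 0 :=
      (mul_eq_zero.1 (congrFun hsucc i)).resolve_right
        (sub_ne_zero.2 (hb.ne (Fin.succ_ne_zero i)))
    have hc_zero : c 0 = 0 := by simpa [Fin.sum_univ_succ, hb'0, hc_succ] using hc' 0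
    funext i
    cases i using Fin.cases
    exacts [hc_zero, hc_succ _]

theorem eq_zero_of_sum_mul_exp_eq_zero {n : ℕ} {b : Fin n → ℝ} (hb : Injective b)
    {x : Fin n → ℝ} (hx : Injective x) {c : Fin n → ℝ}
    (hc : ∀ j, ∑ i, c i * exp (b i * x j) = 0) : c = 0 := by
  have hcard : (univ.image x).card = n := by rw [card_image_of_injective _ hx, card_fin]
  refine eq_zero_of_sum_mul_exp_eq_zero_of_strictMono hb ((univ.image x).orderEmbOfFin hcard).strictMono
    fun j => ?_
  obtain ⟨k, -, hk⟩ := mem_image.1 ((univ.image x).orderEmbOfFin_mem hcard j)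
  rw [← hk]
  exact hc k

theorem linearIndependent_exp_mul {ι : Type*} {n : ℕ} {b : Fin n → ℝ} (hb : Injective b)
    (ε : ι → ℝ) {m : Fin n → ι} (hm : Injective (ε ∘ m)) :
    LinearIndependent ℝ fun i (k : ι) => exp (b i * ε k) := by
  refine Fintype.linearIndependent_iff.2 fun c hc =>
    congrFun (eq_zero_of_sum_mul_exp_eq_zero hb hm fun j => ?_)
  simpa using congrFun hc (m j)

/-- If the energy levels take at least three distinct values, then the (unnormalized)
Gibbs vectors at three distinct inverse temperatures are linearly independent. -/
theorem gibbs_vectors_linearIndependent {d : ℕ} (β₁ β₂ β₃ : ℝ)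
    (h12 : β₁ < β₂) (h23 : β₂ < β₃) (ε : Fin d → ℝ)
    (hε : ∃ n₁ n₂ n₃ : Fin d, ε n₁ ≠ ε n₂ ∧ ε n₁ ≠ ε n₃ ∧ ε n₂ ≠ ε n₃) :
    LinearIndependent ℝ
      ![(fun n => Real.exp (-β₁ * ε n) : Fin d → ℝ),
        (fun n => Real.exp (-β₂ * ε n) : Fin d → ℝ),
        (fun n => Real.exp (-β₃ * ε n) : Fin d → ℝ)] := by
  obtain ⟨n₁, n₂, n₃, h₁₂, h₁₃, h₂₃⟩ := hε
  have hβ : StrictAnti ![-β₁, -β₂, -β₃] :=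
    (strictAnti_vecEmpty.vecCons (neg_lt_neg h23)).vecCons (neg_lt_neg h12)
  have hn : Injective (ε ∘ ![n₁, n₂, n₃]) := by
    intro i j h
    fin_cases i <;> fin_cases j <;> simp_all [eq_comm]
  convert linearIndependent_exp_mul hβ.injective ε hn using 1
  ext i k
  fin_cases i <;> simp
end

section
/- Let p, q : Fin d → ℝ with p_n > 0 and q_n > 0 for all n. Then, as α → ∞, (1/α) · log(∑_{n=1}^d q_n · (p_n/q_n)^α) converges to max_{1 ≤ n ≤ d} log(p_n/q_n). (In the α → ∞ limit, the normalized logarithm of the f_α-divergence-type sum is governed by the state where p and q differ the most.) -/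
open Finset Real Filter

/-- In the `α → ∞` limit, the normalized logarithm of the `f_α`-divergence-type
sum `∑_n q_n (p_n/q_n)^α` converges to the maximum of `log (p_n/q_n)`. -/
theorem falpha_divergence_limit {d : ℕ} (hd : 0 < d)
    (p q : Fin d → ℝ) (hp : ∀ n, 0 < p n) (hq : ∀ n, 0 < q n) :
    Tendsto (fun α : ℝ => (1 / α) * Real.log (∑ n, q n * (p n / q n) ^ α)) atTop
      (nhds (Finset.univ.sup'
        (Finset.univ_nonempty_iff.mpr (Fin.pos_iff_nonempty.mp hd))
        (fun n => Real.log (p n / q n)))) := by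
  have hne : (Finset.univ : Finset (Fin d)).Nonempty :=
    Finset.univ_nonempty_iff.mpr (Fin.pos_iff_nonempty.mp hd)
  set M := Finset.univ.sup' hne (fun n => Real.log (p n / q n)) with hM
  obtain ⟨n0, -, hn0⟩ := Finset.exists_mem_eq_sup' hne (fun n => Real.log (p n / q n))
  have hr : ∀ n, 0 < p n / q n := fun n => div_pos (hp n) (hq n)
  have hle : ∀ n, p n / q n ≤ p n0 / q n0 := by
    intro n
    have := Finset.le_sup' (fun n => Real.log (p n / q n)) (Finset.mem_univ n)
    exact (Real.log_le_log_iff (hr n) (hr n0)).mp (le_of_le_of_eq this hn0)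
  -- positivity of the sum
  have hSpos : ∀ α : ℝ, 0 < ∑ n, q n * (p n / q n) ^ α := fun α =>
    Finset.sum_pos (fun n _ => mul_pos (hq n) (Real.rpow_pos_of_pos (hr n) α))
      hne
  -- lower bound
  have hlow : ∀ᶠ α : ℝ in atTop,
      (1 / α) * Real.log (q n0) + M ≤ (1 / α) * Real.log (∑ n, q n * (p n / q n) ^ α) := by
    filter_upwards [eventually_gt_atTop 0] with α hα
    have h1 : q n0 * (p n0 / q n0) ^ α ≤ ∑ n, q n * (p n / q n) ^ α :=
      Finset.single_le_sum (f := fun n => q n * (p n / q n) ^ α)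
        (fun n _ => le_of_lt (mul_pos (hq n) (Real.rpow_pos_of_pos (hr n) α)))
        (Finset.mem_univ n0)
    have h2 : Real.log (q n0 * (p n0 / q n0) ^ α)
        ≤ Real.log (∑ n, q n * (p n / q n) ^ α) :=
      Real.log_le_log (mul_pos (hq n0) (Real.rpow_pos_of_pos (hr n0) α)) h1
    rw [Real.log_mul (ne_of_gt (hq n0)) (ne_of_gt (Real.rpow_pos_of_pos (hr n0) α)),
      Real.log_rpow (hr n0)] at h2
    have := mul_le_mul_of_nonneg_left h2 (le_of_lt (one_div_pos.mpr hα))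
    calc (1 / α) * Real.log (q n0) + M
        = (1 / α) * (Real.log (q n0) + α * Real.log (p n0 / q n0)) := by
          rw [hM, hn0]; field_simp
      _ ≤ _ := this
  -- upper bound
  have hhigh : ∀ᶠ α : ℝ in atTop,
      (1 / α) * Real.log (∑ n, q n * (p n / q n) ^ α)
        ≤ (1 / α) * Real.log (∑ n, q n) + M := by
    filter_upwards [eventually_gt_atTop 0] with α hα
    have h1 : ∑ n, q n * (p n / q n) ^ α ≤ (∑ n, q n) * (p n0 / q n0) ^ α := by
      rw [Finset.sum_mul]
      refine Finset.sum_le_sum (fun n _ => ?_)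
      exact mul_le_mul_of_nonneg_left
        (Real.rpow_le_rpow (le_of_lt (hr n)) (hle n) (le_of_lt hα)) (le_of_lt (hq n))
    have hqsum : 0 < ∑ n, q n := Finset.sum_pos (fun n _ => hq n) hne
    have h2 := Real.log_le_log (hSpos α) h1
    rw [Real.log_mul (ne_of_gt hqsum) (ne_of_gt (Real.rpow_pos_of_pos (hr n0) α)),
      Real.log_rpow (hr n0)] at h2
    have := mul_le_mul_of_nonneg_left h2 (le_of_lt (one_div_pos.mpr hα))
    calc (1 / α) * Real.log (∑ n, q n * (p n / q n) ^ α) ≤ _ := this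
      _ = (1 / α) * Real.log (∑ n, q n) + M := by rw [hM, hn0]; field_simp
  have hlim : ∀ c : ℝ, Tendsto (fun α : ℝ => (1 / α) * c + M) atTop (nhds M) := by
    intro c
    have : Tendsto (fun α : ℝ => (1 / α) * c) atTop (nhds 0) := by
      simpa using (tendsto_inv_atTop_zero (𝕜 := ℝ)).mul_const c
    simpa using this.add tendsto_const_nhds
  exact tendsto_of_tendsto_of_tendsto_of_le_of_le' (hlim _) (hlim _) hlow hhigh
end
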